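/- arXiv:1702.02047 — 2 statements merged into one kernel-verified Lean document; each statement's English description precedes it below -/
import Mathlib

section
/- For every concept class 𝓛 over a universe X, PBTD(𝓛) ≤ RTD(𝓛); moreover, if 𝓛 is finite then PBTD(𝓛) = RTD(𝓛). -/
namespace PBT

variable {X : Type*}

/-- A set `L ⊆ X` is consistent with a set `T` of labeled examples
(label `true` = “+”, label `false` = “−”). -/
def Consistent (L : Set X) (T : Set (X × Bool)) : Prop :=
  ∀ p ∈ T, (p.2 = true → p.1 ∈ L) ∧ (p.2 = false → p.1 ∉ L)

/-- `T` is a teaching set for `L` w.r.t. the concept class `𝓛`: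
`L` is the only concept in `𝓛` that is consistent with `T`. -/
def IsTeachingSet (𝓛 : Set (Set X)) (L : Set X) (T : Set (X × Bool)) : Prop :=
  Consistent L T ∧ ∀ L' ∈ 𝓛, Consistent L' T → L' = L

/-- `TD L 𝓛`: least size of a finite teaching set for `L` w.r.t. `𝓛` (`⊤` if none exists). -/
noncomputable def TD (L : Set X) (𝓛 : Set (Set X)) : ℕ∞ :=
  sInf {n : ℕ∞ | ∃ T : Finset (X × Bool), IsTeachingSet 𝓛 L ↑T ∧ n = T.card}

/-- A positive teaching set, identified with its set of (positively labeled) points. -/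
def IsPosTeachingSet (𝓛 : Set (Set X)) (L : Set X) (S : Set X) : Prop :=
  S ⊆ L ∧ ∀ L' ∈ 𝓛, S ⊆ L' → L' = L

/-- least size of a finite positive teaching set for `L` w.r.t. `𝓛` (`⊤` if none exists). -/
noncomputable def TDpos (L : Set X) (𝓛 : Set (Set X)) : ℕ∞ :=
  sInf {n : ℕ∞ | ∃ S : Finset X, IsPosTeachingSet 𝓛 L ↑S ∧ n = S.card}

/-- A strict partial order (preference relation) on concepts:
`pr L' L` means `L` is strictly preferred over `L'`. -/
def StrictPO (pr : Set X → Set X → Prop) : Prop :=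
  (∀ A, ¬ pr A A) ∧ ∀ A B C : Set X, pr A B → pr B C → pr A C

/-- `PBTDord 𝓛 pr = sup_{L ∈ 𝓛} TD(L, 𝓛 \ {L' ∈ 𝓛 | pr L' L})`. -/
noncomputable def PBTDord (𝓛 : Set (Set X)) (pr : Set X → Set X → Prop) : ℕ∞ :=
  ⨆ L ∈ 𝓛, TD L {L' ∈ 𝓛 | ¬ pr L' L}

/-- preference-based teaching dimension of `𝓛`. -/
noncomputable def PBTD (𝓛 : Set (Set X)) : ℕ∞ :=
  sInf {v : ℕ∞ | ∃ pr, StrictPO pr ∧ v = PBTDord 𝓛 pr}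

/-- `PBTDposOrd 𝓛 pr = sup_{L ∈ 𝓛} TD⁺(L, 𝓛 \ {L' ∈ 𝓛 | pr L' L})`. -/
noncomputable def PBTDposOrd (𝓛 : Set (Set X)) (pr : Set X → Set X → Prop) : ℕ∞ :=
  ⨆ L ∈ 𝓛, TDpos L {L' ∈ 𝓛 | ¬ pr L' L}

/-- positive preference-based teaching dimension of `𝓛`. -/
noncomputable def PBTDpos (𝓛 : Set (Set X)) : ℕ∞ :=
  sInf {v : ℕ∞ | ∃ pr, StrictPO pr ∧ v = PBTDposOrd 𝓛 pr}


/-- A teaching sequence for `𝓛`: a (finite or infinite) partition of `𝓛` into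
sub-classes `P 0, P 1, …` (a finite sequence is modelled by letting the
remaining parts be empty). -/
def IsTeachingSeq (𝓛 : Set (Set X)) (P : ℕ → Set (Set X)) : Prop :=
  (∀ i j, i ≠ j → Disjoint (P i) (P j)) ∧ (⋃ i, P i) = 𝓛

/-- the order `sup_i sup_{L ∈ P i} TD(L, 𝓛 \ (P 0 ∪ ⋯ ∪ P (i-1)))` of a teaching sequence. -/
noncomputable def seqOrder (𝓛 : Set (Set X)) (P : ℕ → Set (Set X)) : ℕ∞ :=
  ⨆ i, ⨆ L ∈ P i, TD L (𝓛 \ ⋃ j < i, P j)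

/-- the recursive teaching dimension of `𝓛`. -/
noncomputable def RTD (𝓛 : Set (Set X)) : ℕ∞ :=
  sInf {v : ℕ∞ | ∃ P, IsTeachingSeq 𝓛 P ∧ v = seqOrder 𝓛 P}


/-!
Both dimensions rank the concepts. Ranking `L` by the index of the part of a teaching sequence
that contains it is a preference order under which the concepts not beaten by `L` are exactly
those that remain when the part of `L` is taught, so `PBTD ≤ RTD`. Conversely, for a finite
class, ranking `L` by the number of concepts less preferred than `L` strictly increases along
the preference order; its level sets form a teaching sequence whose remaining classes are
contained in the preference classes, and `TD` is monotone in the class.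
-/

theorem TD_mono {L : Set X} {𝓒 𝓒' : Set (Set X)} (h : 𝓒' ⊆ 𝓒) : TD L 𝓒' ≤ TD L 𝓒 := by
  apply sInf_le_sInf
  rintro n ⟨T, ⟨hcons, huniq⟩, rfl⟩
  exact ⟨T, ⟨hcons, fun L' hL' => huniq L' (h hL')⟩, rfl⟩

theorem strictPO_comap_lt {α : Type*} [Preorder α] (f : Set X → α) :
    StrictPO (fun A B => f A < f B) :=
  ⟨fun A => lt_irrefl (f A), fun _ _ _ => lt_trans⟩

theorem PBTD_le_PBTDord {𝓛 : Set (Set X)} {pr : Set X → Set X → Prop} (hpr : StrictPO pr) :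
    PBTD 𝓛 ≤ PBTDord 𝓛 pr :=
  sInf_le ⟨pr, hpr, rfl⟩

theorem RTD_le_seqOrder {𝓛 : Set (Set X)} {P : ℕ → Set (Set X)} (hP : IsTeachingSeq 𝓛 P) :
    RTD 𝓛 ≤ seqOrder 𝓛 P :=
  sInf_le ⟨P, hP, rfl⟩

section PartIndex

variable {𝓛 : Set (Set X)} {P : ℕ → Set (Set X)}

/-- The least index of a part containing `L` (`0` if there is none). -/
noncomputable def partIndex (P : ℕ → Set (Set X)) (L : Set X) : ℕ :=
  sInf {i | L ∈ P i}

theorem partIndex_le {L : Set X} {i : ℕ} (h : L ∈ P i) : partIndex P L ≤ i :=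
  Nat.sInf_le h

theorem mem_partIndex {L : Set X} (h : L ∈ ⋃ i, P i) : L ∈ P (partIndex P L) :=
  Nat.sInf_mem (Set.mem_iUnion.mp h)

theorem setOf_not_partIndex_lt (hP : (⋃ i, P i) = 𝓛) (L : Set X) :
    {L' ∈ 𝓛 | ¬ partIndex P L' < partIndex P L} = 𝓛 \ ⋃ j < partIndex P L, P j := by
  ext L'
  simp only [Set.mem_ofPred_eq, Set.mem_sdiff, Set.mem_iUnion, not_exists, not_lt]
  refine and_congr_right fun hL' => ⟨fun hle j hj hL'j => ?_, fun hnot => ?_⟩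
  · exact absurd ((partIndex_le hL'j).trans_lt hj) hle.not_gt
  · by_contra! hlt
    exact hnot _ hlt (mem_partIndex (hP ▸ hL'))

theorem PBTDord_partIndex_le_seqOrder (hP : (⋃ i, P i) = 𝓛) :
    PBTDord 𝓛 (fun A B => partIndex P A < partIndex P B) ≤ seqOrder 𝓛 P := by
  refine iSup₂_le fun L hL => ?_
  rw [setOf_not_partIndex_lt hP L]
  exact le_iSup_of_le (partIndex P L) (le_iSup₂_of_le L (mem_partIndex (hP ▸ hL)) le_rfl)

end PartIndex

theorem PBTD_le_RTD (𝓛 : Set (Set X)) : PBTD 𝓛 ≤ RTD 𝓛 :=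
  le_sInf fun _ ⟨P, hP, hv⟩ => hv ▸
    (PBTD_le_PBTDord (strictPO_comap_lt (partIndex P))).trans
      (PBTDord_partIndex_le_seqOrder hP.2)

section LevelSets

variable {𝓛 : Set (Set X)} {pr : Set X → Set X → Prop} {f : Set X → ℕ}

def levelSets (𝓛 : Set (Set X)) (f : Set X → ℕ) (i : ℕ) : Set (Set X) :=
  {L ∈ 𝓛 | f L = i}

theorem isTeachingSeq_levelSets (𝓛 : Set (Set X)) (f : Set X → ℕ) :
    IsTeachingSeq 𝓛 (levelSets 𝓛 f) := by
  refine ⟨fun i j hij => Set.disjoint_left.mpr ?_, ?_⟩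
  · rintro L ⟨-, rfl⟩ ⟨-, rfl⟩
    exact hij rfl
  · ext L
    simp only [levelSets, Set.mem_iUnion, Set.mem_ofPred_eq, exists_and_left, exists_eq', and_true]

theorem seqOrder_levelSets_le (hf : ∀ A ∈ 𝓛, ∀ B, pr A B → f A < f B) :
    seqOrder 𝓛 (levelSets 𝓛 f) ≤ PBTDord 𝓛 pr := by
  refine iSup_le fun i => iSup₂_le ?_
  rintro L ⟨hL, rfl⟩
  have hsub : 𝓛 \ ⋃ j < f L, levelSets 𝓛 f j ⊆ {L' ∈ 𝓛 | ¬ pr L' L} := by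
    rintro L' ⟨hL', hnot⟩
    exact ⟨hL', fun hpr => hnot (Set.mem_biUnion (hf L' hL' L hpr) ⟨hL', rfl⟩)⟩
  exact (TD_mono hsub).trans (le_iSup₂_of_le L hL le_rfl)

/-- On a finite class, counting the less preferred concepts ranks the class along `pr`. -/
theorem exists_rank_of_finite (h𝓛 : 𝓛.Finite) (hpr : StrictPO pr) :
    ∃ f : Set X → ℕ, ∀ A ∈ 𝓛, ∀ B, pr A B → f A < f B := by
  refine ⟨fun L => {L' ∈ 𝓛 | pr L' L}.ncard, fun A hA B hAB => Set.ncard_lt_ncard ?_ ?_⟩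
  · refine ⟨fun L' ⟨hL', hL'A⟩ => ⟨hL', hpr.2 _ _ _ hL'A hAB⟩, fun hsub => ?_⟩
    exact hpr.1 A (hsub ⟨hA, hAB⟩).2
  · exact h𝓛.subset fun _ => And.left

end LevelSets

theorem RTD_le_PBTD {𝓛 : Set (Set X)} (h𝓛 : 𝓛.Finite) : RTD 𝓛 ≤ PBTD 𝓛 :=
  le_sInf fun _ ⟨pr, hpr, hv⟩ => by
    obtain ⟨f, hf⟩ := exists_rank_of_finite h𝓛 hpr
    exact hv ▸ (RTD_le_seqOrder (isTeachingSeq_levelSets 𝓛 f)).trans (seqOrder_levelSets_le hf)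

/-- `PBTD(𝓛) ≤ RTD(𝓛)`, with equality for finite `𝓛`. -/
theorem pbtd_le_rtd {X : Type*} (𝓛 : Set (Set X)) :
    PBTD 𝓛 ≤ RTD 𝓛 ∧ (𝓛.Finite → PBTD 𝓛 = RTD 𝓛) :=
  ⟨PBTD_le_RTD 𝓛, fun h𝓛 => le_antisymm (PBTD_le_RTD 𝓛) (RTD_le_PBTD h𝓛)⟩

end PBT
end

section
/- Let 𝓛 be a concept class over a universe X that is intersection-closed (the intersection of any non-empty family of concepts in 𝓛 is again a concept in 𝓛). Then I′(𝓛) = PBTD⁺(𝓛) = I(𝓛). -/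
/-!
In an intersection-closed class, every set `S` lying in some concept has a least concept
containing it, its hull, and `S` spans `L` exactly when the hull of `S` is `L`. The hull of a
weak spanning set of `L` is a concept between `S` and `L`, hence is `L` itself. Preferring
smaller concepts turns every spanning set into a positive teaching set. Conversely, for any
preference order, a positive teaching set `S` of `L` spans `L`: if the hull `M` of `S` is not
less preferred than `L`, then `S` teaches `M = L`; otherwise `L` is not less preferred than
`M`, so the teaching set of `M`, lying in `M ⊆ L`, forces `L = M`.
-/

namespace PBT

variable {X : Type*}

/-- `I(𝓛)`: the smallest `k` such that every `L ∈ 𝓛` has a spanning set of size `≤ k`. -/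
noncomputable def Ispan (𝓛 : Set (Set X)) : ℕ∞ :=
  sInf {k : ℕ∞ | ∀ L ∈ 𝓛, ∃ S : Finset X, ↑S ⊆ L ∧
    (∀ L' ∈ 𝓛, ↑S ⊆ L' → L ⊆ L') ∧ (S.card : ℕ∞) ≤ k}

/-- `I′(𝓛)`: the smallest `k` such that every `L ∈ 𝓛` has a weak spanning set of size `≤ k`. -/
noncomputable def Iweak (𝓛 : Set (Set X)) : ℕ∞ :=
  sInf {k : ℕ∞ | ∀ L ∈ 𝓛, ∃ S : Finset X, ↑S ⊆ L ∧
    (∀ L' ∈ 𝓛, L' ⊂ L → ¬ ↑S ⊆ L') ∧ (S.card : ℕ∞) ≤ k}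

lemma TDpos_le_card {𝓒 : Set (Set X)} {L : Set X} {S : Finset X}
    (hS : IsPosTeachingSet 𝓒 L S) : TDpos L 𝓒 ≤ S.card :=
  sInf_le ⟨S, hS, rfl⟩

lemma exists_isPosTeachingSet_card_eq {𝓒 : Set (Set X)} {L : Set X} (h : TDpos L 𝓒 ≠ ⊤) :
    ∃ S : Finset X, IsPosTeachingSet 𝓒 L S ∧ (S.card : ℕ∞) = TDpos L 𝓒 := by
  have hne : {n : ℕ∞ | ∃ S : Finset X, IsPosTeachingSet 𝓒 L ↑S ∧ n = S.card}.Nonempty :=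
    Set.nonempty_iff_ne_empty.2 fun he => h (by rw [TDpos, he, sInf_empty])
  obtain ⟨S, hS, hcard⟩ := csInf_mem hne
  exact ⟨S, hS, hcard.symm⟩

lemma PBTDpos_le_PBTDposOrd {𝓛 : Set (Set X)} {pr : Set X → Set X → Prop} (hpr : StrictPO pr) :
    PBTDpos 𝓛 ≤ PBTDposOrd 𝓛 pr :=
  sInf_le ⟨pr, hpr, rfl⟩

lemma TDpos_le_PBTDposOrd {𝓛 : Set (Set X)} {pr : Set X → Set X → Prop} {M : Set X}
    (hM : M ∈ 𝓛) : TDpos M {L' ∈ 𝓛 | ¬ pr L' M} ≤ PBTDposOrd 𝓛 pr :=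
  le_iSup₂ (f := fun M _ => TDpos M {L' ∈ 𝓛 | ¬ pr L' M}) M hM

lemma strictPO_ssuperset : StrictPO (fun A B : Set X => B ⊂ A) :=
  ⟨fun _ h => h.ne rfl, fun _ _ _ hAB hBC => hBC.trans hAB⟩

lemma StrictPO.asymm {pr : Set X → Set X → Prop} (hpr : StrictPO pr) {A B : Set X}
    (hAB : pr A B) : ¬ pr B A :=
  fun hBA => hpr.1 A (hpr.2 A B A hAB hBA)

variable {𝓛 : Set (Set X)} {L S : Set X}

def IsSpanningSet (𝓛 : Set (Set X)) (L S : Set X) : Prop :=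
  S ⊆ L ∧ ∀ L' ∈ 𝓛, S ⊆ L' → L ⊆ L'

def IsWeakSpanningSet (𝓛 : Set (Set X)) (L S : Set X) : Prop :=
  S ⊆ L ∧ ∀ L' ∈ 𝓛, L' ⊂ L → ¬ S ⊆ L'

def hull (𝓛 : Set (Set X)) (S : Set X) : Set X :=
  ⋂₀ {L' ∈ 𝓛 | S ⊆ L'}

lemma subset_hull : S ⊆ hull 𝓛 S :=
  Set.subset_sInter fun _ hL' => hL'.2

lemma hull_subset (hL : L ∈ 𝓛) (hSL : S ⊆ L) : hull 𝓛 S ⊆ L :=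
  Set.sInter_subset_of_mem ⟨hL, hSL⟩

lemma hull_mem (hcap : ∀ 𝓕 ⊆ 𝓛, 𝓕.Nonempty → ⋂₀ 𝓕 ∈ 𝓛) (hL : L ∈ 𝓛) (hSL : S ⊆ L) :
    hull 𝓛 S ∈ 𝓛 :=
  hcap _ (fun _ hL' => hL'.1) ⟨L, hL, hSL⟩

lemma isSpanningSet_of_hull_eq (hSL : S ⊆ L) (h : hull 𝓛 S = L) : IsSpanningSet 𝓛 L S :=
  ⟨hSL, fun _ hL' hSL' => h ▸ Set.sInter_subset_of_mem ⟨hL', hSL'⟩⟩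

lemma IsSpanningSet.isWeakSpanningSet (h : IsSpanningSet 𝓛 L S) : IsWeakSpanningSet 𝓛 L S :=
  ⟨h.1, fun L' hL' hL'L hSL' => hL'L.not_subset (h.2 L' hL' hSL')⟩

lemma IsWeakSpanningSet.isSpanningSet (hcap : ∀ 𝓕 ⊆ 𝓛, 𝓕.Nonempty → ⋂₀ 𝓕 ∈ 𝓛)
    (hL : L ∈ 𝓛) (h : IsWeakSpanningSet 𝓛 L S) : IsSpanningSet 𝓛 L S := by
  obtain ⟨hSL, hweak⟩ := h
  refine isSpanningSet_of_hull_eq hSL (by_contra fun hne => ?_)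
  exact hweak _ (hull_mem hcap hL hSL) ((hull_subset hL hSL).ssubset_of_ne hne) subset_hull

lemma IsSpanningSet.isPosTeachingSet (h : IsSpanningSet 𝓛 L S) :
    IsPosTeachingSet {L' ∈ 𝓛 | ¬ L ⊂ L'} L S :=
  ⟨h.1, fun L' hL' hSL' => ((h.2 L' hL'.1 hSL').eq_or_ssubset.resolve_right hL'.2).symm⟩

lemma IsPosTeachingSet.isSpanningSet (hcap : ∀ 𝓕 ⊆ 𝓛, 𝓕.Nonempty → ⋂₀ 𝓕 ∈ 𝓛)
    {pr : Set X → Set X → Prop} (hpr : StrictPO pr) (hL : L ∈ 𝓛)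
    (hteach : ∀ M ∈ 𝓛, ∃ T : Set X, IsPosTeachingSet {L' ∈ 𝓛 | ¬ pr L' M} M T)
    (hS : IsPosTeachingSet {L' ∈ 𝓛 | ¬ pr L' L} L S) : IsSpanningSet 𝓛 L S := by
  have hM := hull_mem hcap hL hS.1
  refine isSpanningSet_of_hull_eq hS.1 ?_
  by_cases hML : pr (hull 𝓛 S) L
  · obtain ⟨T, hTM, hT⟩ := hteach _ hM
    exact (hT L ⟨hL, hpr.asymm hML⟩ (hTM.trans (hull_subset hL hS.1))).symm
  · exact hS.2 _ ⟨hM, hML⟩ subset_hull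

lemma Iweak_le_Ispan : Iweak 𝓛 ≤ Ispan 𝓛 := by
  refine sInf_le_sInf fun k hk L hL => ?_
  obtain ⟨S, hSL, hspan, hcard⟩ := hk L hL
  exact ⟨S, hSL, (IsSpanningSet.isWeakSpanningSet ⟨hSL, hspan⟩).2, hcard⟩

lemma Ispan_le_Iweak (hcap : ∀ 𝓕 ⊆ 𝓛, 𝓕.Nonempty → ⋂₀ 𝓕 ∈ 𝓛) : Ispan 𝓛 ≤ Iweak 𝓛 := by
  refine sInf_le_sInf fun k hk L hL => ?_
  obtain ⟨S, hSL, hweak, hcard⟩ := hk L hL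
  exact ⟨S, hSL, (IsWeakSpanningSet.isSpanningSet hcap hL ⟨hSL, hweak⟩).2, hcard⟩

lemma PBTDpos_le_Ispan : PBTDpos 𝓛 ≤ Ispan 𝓛 := by
  refine le_sInf fun k hk => (PBTDpos_le_PBTDposOrd strictPO_ssuperset).trans ?_
  refine iSup₂_le fun L hL => ?_
  obtain ⟨S, hSL, hspan, hcard⟩ := hk L hL
  exact (TDpos_le_card (IsSpanningSet.isPosTeachingSet ⟨hSL, hspan⟩)).trans hcard

lemma Ispan_le_PBTDposOrd (hcap : ∀ 𝓕 ⊆ 𝓛, 𝓕.Nonempty → ⋂₀ 𝓕 ∈ 𝓛)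
    {pr : Set X → Set X → Prop} (hpr : StrictPO pr) : Ispan 𝓛 ≤ PBTDposOrd 𝓛 pr := by
  rcases eq_or_ne (PBTDposOrd 𝓛 pr) ⊤ with htop | htop
  · exact htop ▸ le_top
  have hteach : ∀ M ∈ 𝓛, ∃ T : Finset X,
      IsPosTeachingSet {L' ∈ 𝓛 | ¬ pr L' M} M T ∧ (T.card : ℕ∞) ≤ PBTDposOrd 𝓛 pr :=
    fun M hM =>
      have hle := TDpos_le_PBTDposOrd (pr := pr) hM
      (exists_isPosTeachingSet_card_eq (ne_top_of_le_ne_top htop hle)).imp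
        fun _ hT => ⟨hT.1, hT.2.trans_le hle⟩
  refine sInf_le fun L hL => ?_
  obtain ⟨S, hS, hcard⟩ := hteach L hL
  have hspan := hS.isSpanningSet hcap hpr hL fun M hM =>
    let ⟨T, hT, _⟩ := hteach M hM; ⟨T, hT⟩
  exact ⟨S, hspan.1, hspan.2, hcard⟩

lemma Ispan_le_PBTDpos (hcap : ∀ 𝓕 ⊆ 𝓛, 𝓕.Nonempty → ⋂₀ 𝓕 ∈ 𝓛) : Ispan 𝓛 ≤ PBTDpos 𝓛 :=
  le_sInf fun _ ⟨_, hpr, hv⟩ => hv ▸ Ispan_le_PBTDposOrd hcap hpr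

/-- For an intersection-closed concept class, `I′(𝓛) = PBTD⁺(𝓛) = I(𝓛)`. -/
theorem intersection_closed_span {X : Type*} (𝓛 : Set (Set X))
    (hcap : ∀ 𝓕 ⊆ 𝓛, 𝓕.Nonempty → ⋂₀ 𝓕 ∈ 𝓛) :
    Iweak 𝓛 = PBTDpos 𝓛 ∧ PBTDpos 𝓛 = Ispan 𝓛 := by
  have hPBTD : PBTDpos 𝓛 = Ispan 𝓛 := le_antisymm PBTDpos_le_Ispan (Ispan_le_PBTDpos hcap)
  have hIweak : Iweak 𝓛 = Ispan 𝓛 := le_antisymm Iweak_le_Ispan (Ispan_le_Iweak hcap)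
  exact ⟨hIweak.trans hPBTD.symm, hPBTD⟩

end PBT
end
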